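/- Let Σ(P), Σ(Q) be positive systems for Σ with P ⪰ Q. Then (a) Σ(P) ∩ 𝔞_q* = Σ(Q) ∩ 𝔞_q*, and (b) Σ(P) ∩ 𝔞_h* = Σ(Q) ∩ 𝔞_h*. -/
import Mathlib


/-- `P` is a positive system for the root set `S`: there is `X ∈ V` on which no root of `S`
vanishes, such that `P` is the set of roots of `S` that are positive on `X`. -/
def IsPosSystem {V : Type*} [AddCommGroup V] [Module ℝ V]
    (S P : Set (V →ₗ[ℝ] ℝ)) : Prop :=
  ∃ X : V, (∀ α ∈ S, α X ≠ 0) ∧ P = {α | α ∈ S ∧ 0 < α X}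

/-- `Σ(P, σ) = Σ(P) ∩ σ·Σ(P)`, where `σ` acts on functionals by `λ ↦ λ ∘ σ`. -/
def rootsSigma {V : Type*} [AddCommGroup V] [Module ℝ V]
    (σ : V →ₗ[ℝ] V) (P : Set (V →ₗ[ℝ] ℝ)) : Set (V →ₗ[ℝ] ℝ) :=
  P ∩ ((fun α => α.comp σ) '' P)

/-- `Σ(P, σθ) = Σ(P) ∩ σθ·Σ(P)`, where `σθ` acts on functionals by `λ ↦ -(λ ∘ σ)`. -/
def rootsSigmaTheta {V : Type*} [AddCommGroup V] [Module ℝ V]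
    (σ : V →ₗ[ℝ] V) (P : Set (V →ₗ[ℝ] ℝ)) : Set (V →ₗ[ℝ] ℝ) :=
  P ∩ ((fun α => -(α.comp σ)) '' P)

/-- `𝔞_h* = {λ : λ ∘ σ = λ}`, the functionals fixed by `σ`. -/
def ahStar {V : Type*} [AddCommGroup V] [Module ℝ V] (σ : V →ₗ[ℝ] V) :
    Set (V →ₗ[ℝ] ℝ) :=
  {l | l.comp σ = l}

/-- `𝔞_q* = {λ : λ ∘ σ = -λ}`. -/
def aqStar {V : Type*} [AddCommGroup V] [Module ℝ V] (σ : V →ₗ[ℝ] V) :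
    Set (V →ₗ[ℝ] ℝ) :=
  {l | l.comp σ = -l}

/-- The partial ordering `P ⪰ Q`: `Σ(Q,σθ) ⊆ Σ(P,σθ)` and `Σ(P,σ) ⊆ Σ(Q,σ)`. -/
def Dominates {V : Type*} [AddCommGroup V] [Module ℝ V]
    (σ : V →ₗ[ℝ] V) (P Q : Set (V →ₗ[ℝ] ℝ)) : Prop :=
  rootsSigmaTheta σ Q ⊆ rootsSigmaTheta σ P ∧ rootsSigma σ P ⊆ rootsSigma σ Q

/-- If `P ⪰ Q`, then `Σ(P) ∩ 𝔞_q* = Σ(Q) ∩ 𝔞_q*` and `Σ(P) ∩ 𝔞_h* = Σ(Q) ∩ 𝔞_h*`. -/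
theorem dominates_inter_aqStar_ahStar
    {V : Type*} [AddCommGroup V] [Module ℝ V] [FiniteDimensional ℝ V]
    (σ : V →ₗ[ℝ] V) (hσ : ∀ X, σ (σ X) = X)
    (S : Set (V →ₗ[ℝ] ℝ)) (hSfin : S.Finite) (hS0 : (0 : V →ₗ[ℝ] ℝ) ∉ S)
    (hSneg : ∀ α ∈ S, -α ∈ S) (hSσ : ∀ α ∈ S, α.comp σ ∈ S)
    (P Q : Set (V →ₗ[ℝ] ℝ)) (hP : IsPosSystem S P) (hQ : IsPosSystem S Q)
    (hPQ : Dominates σ P Q) :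
    P ∩ aqStar σ = Q ∩ aqStar σ ∧ P ∩ ahStar σ = Q ∩ ahStar σ := by
  obtain ⟨X, hX, hPdef⟩ := hP
  obtain ⟨Y, hY, hQdef⟩ := hQ
  obtain ⟨h1, h2⟩ := hPQ
  have hPS : P ⊆ S := by rw [hPdef]; intro a ha; exact ha.1
  have hQS : Q ⊆ S := by rw [hQdef]; intro a ha; exact ha.1
  have hnegP : ∀ α ∈ S, α ∉ P → -α ∈ P := by
    intro α hαS hαP
    rw [hPdef]
    refine ⟨hSneg α hαS, ?_⟩
    have : ¬ (0 < α X) := fun h => hαP (hPdef ▸ ⟨hαS, h⟩)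
    have hne := hX α hαS
    simp only [LinearMap.neg_apply]
    cases lt_or_gt_of_ne hne with
    | inl h => linarith
    | inr h => exact absurd h this
  have hnegQ : ∀ α ∈ S, α ∉ Q → -α ∈ Q := by
    intro α hαS hαQ
    rw [hQdef]
    refine ⟨hSneg α hαS, ?_⟩
    have : ¬ (0 < α Y) := fun h => hαQ (hQdef ▸ ⟨hαS, h⟩)
    have hne := hY α hαS
    simp only [LinearMap.neg_apply]
    cases lt_or_gt_of_ne hne with
    | inl h => linarith
    | inr h => exact absurd h this
  have hPnot : ∀ α ∈ P, -α ∉ P := by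
    intro α hα hnα
    rw [hPdef] at hα hnα
    simp only [Set.mem_setOf_eq, LinearMap.neg_apply] at hα hnα
    linarith [hα.2, hnα.2]
  have hQnot : ∀ α ∈ Q, -α ∉ Q := by
    intro α hα hnα
    rw [hQdef] at hα hnα
    simp only [Set.mem_setOf_eq, LinearMap.neg_apply] at hα hnα
    linarith [hα.2, hnα.2]
  have memST : ∀ R : Set (V →ₗ[ℝ] ℝ), ∀ α ∈ R, α ∈ aqStar σ → α ∈ rootsSigmaTheta σ R := by
    intro R α hα haq
    exact ⟨hα, ⟨α, hα, by show -(α ∘ₗ σ) = α; rw [show α.comp σ = -α from haq, neg_neg]⟩⟩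
  have memS : ∀ R : Set (V →ₗ[ℝ] ℝ), ∀ α ∈ R, α ∈ ahStar σ → α ∈ rootsSigma σ R := by
    intro R α hα hah
    exact ⟨hα, ⟨α, hα, hah⟩⟩
  have negaq : ∀ α : (V →ₗ[ℝ] ℝ), α ∈ aqStar σ → -α ∈ aqStar σ := by
    intro α h
    simp only [aqStar, Set.mem_setOf_eq] at h ⊢
    rw [LinearMap.neg_comp, h, neg_neg]
  have negah : ∀ α : (V →ₗ[ℝ] ℝ), α ∈ ahStar σ → -α ∈ ahStar σ := by
    intro α h
    simp only [ahStar, Set.mem_setOf_eq] at h ⊢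
    rw [LinearMap.neg_comp, h]
  constructor
  · ext α
    constructor
    · rintro ⟨hαP, haq⟩
      refine ⟨?_, haq⟩
      by_contra hnQ
      have h1' : -α ∈ P := (h1 (memST Q (-α) (hnegQ α (hPS hαP) hnQ) (negaq α haq))).1
      exact hPnot α hαP h1'
    · rintro ⟨hαQ, haq⟩
      exact ⟨(h1 (memST Q α hαQ haq)).1, haq⟩
  · ext α
    constructor
    · rintro ⟨hαP, hah⟩
      exact ⟨(h2 (memS P α hαP hah)).1, hah⟩
    · rintro ⟨hαQ, hah⟩
      refine ⟨?_, hah⟩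
      by_contra hnP
      have h2' : -α ∈ Q := (h2 (memS P (-α) (hnegP α (hQS hαQ) hnP) (negah α hah))).1
      exact hQnot α hαQ h2'
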